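/- arXiv:2102.11316 — 2 statements merged into one kernel-verified Lean document; each statement's English description precedes it below -/
import Mathlib

section
/- There exist three simple graphs G₁, G₂, G₃ on the vertex set Fin 8 that are pairwise non-isomorphic, such that each Gᵢ is isomorphic to its own complement, each Gᵢ is 3-connected, each Gᵢ has exactly 14 edges, and in each Gᵢ exactly four vertices have degree 4 and exactly four vertices have degree 3. -/
open Classical

/-- A simple graph on a finite vertex set is 3-connected if it has at least 4 vertices
and deleting any set of at most 2 vertices leaves a connected induced subgraph. -/
def ThreeConnected {V : Type*} [Fintype V] (G : SimpleGraph V) : Prop :=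
  4 ≤ Fintype.card V ∧
    ∀ S : Finset V, S.card ≤ 2 → (G.induce ((↑S : Set V)ᶜ)).Connected

/-! ### BFS-based connectivity certificate -/

section BFS

variable {V : Type*} [Fintype V] [DecidableEq V] (G : SimpleGraph V) [DecidableRel G.Adj]

def bstep (S : Finset V) (p : Finset V) : Finset V :=
  Finset.univ.filter fun v => v ∈ p ∨ (v ∉ S ∧ ∃ u ∈ p, G.Adj u v)

def breach (S : Finset V) (v0 : V) : Finset V := (bstep G S)^[Fintype.card V] {v0}

def bconn (S : Finset V) : Bool :=
  decide (∃ v0, v0 ∉ S ∧ breach G S v0 = Finset.univ \ S)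

lemma breach_sound (S : Finset V) (v0 : V) (h0 : v0 ∉ S)
    (h0' : v0 ∈ ((↑S : Set V)ᶜ)) :
    ∀ v ∈ breach G S v0, ∃ hv : v ∈ ((↑S : Set V)ᶜ),
      (G.induce ((↑S : Set V)ᶜ)).Reachable ⟨v0, h0'⟩ ⟨v, hv⟩ := by
  suffices H : ∀ k, ∀ v ∈ (bstep G S)^[k] {v0}, ∃ hv : v ∈ ((↑S : Set V)ᶜ),
      (G.induce ((↑S : Set V)ᶜ)).Reachable ⟨v0, h0'⟩ ⟨v, hv⟩ from H _
  intro k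
  induction k with
  | zero =>
    intro v hv
    simp only [Function.iterate_zero, id, Finset.mem_singleton] at hv
    subst hv
    exact ⟨h0', SimpleGraph.Reachable.refl _⟩
  | succ k ih =>
    rw [Function.iterate_succ_apply'] at *
    intro v hv
    simp only [bstep, Finset.mem_filter, Finset.mem_univ, true_and] at hv
    rcases hv with hv | ⟨hvS, u, hu, hadj⟩
    · exact ih v hv
    · obtain ⟨hu', hr⟩ := ih u hu
      have hv' : v ∈ ((↑S : Set V)ᶜ) := by simpa using hvS
      refine ⟨hv', hr.trans (SimpleGraph.Adj.reachable ?_)⟩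
      exact hadj

lemma connected_of_bconn (S : Finset V) (h : bconn G S = true) :
    (G.induce ((↑S : Set V)ᶜ)).Connected := by
  rw [bconn, decide_eq_true_iff] at h
  obtain ⟨v0, h0, hall⟩ := h
  have h0' : v0 ∈ ((↑S : Set V)ᶜ) := by simpa using h0
  rw [SimpleGraph.connected_iff]
  refine ⟨fun u v => ?_, ⟨⟨v0, h0'⟩⟩⟩
  obtain ⟨u, hu⟩ := u
  obtain ⟨v, hv⟩ := v
  have hu2 : u ∈ breach G S v0 := by
    rw [hall, Finset.mem_sdiff]; exact ⟨Finset.mem_univ u, by simpa using hu⟩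
  have hv2 : v ∈ breach G S v0 := by
    rw [hall, Finset.mem_sdiff]; exact ⟨Finset.mem_univ v, by simpa using hv⟩
  obtain ⟨hu', ru⟩ := breach_sound G S v0 h0 h0' u hu2
  obtain ⟨hv', rv⟩ := breach_sound G S v0 h0 h0' v hv2
  exact ru.symm.trans rv

lemma threeConnected_of_bconn (h4 : 4 ≤ Fintype.card V)
    (h : ∀ S : Finset V, S.card ≤ 2 → bconn G S = true) :
    ThreeConnected G :=
  ⟨h4, fun S hS => connected_of_bconn G S (h S hS)⟩

end BFS

/-! ### An isomorphism invariant -/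

section Inv

variable {V : Type*} [Fintype V] [DecidableEq V]

def oddInv (G : SimpleGraph V) [DecidableRel G.Adj] : ℕ :=
  Fintype.card {p : V × V // p.1 ≠ p.2 ∧ ¬ G.Adj p.1 p.2 ∧
    Odd (Fintype.card {w : V // G.Adj p.1 w ∧ G.Adj p.2 w})}

lemma oddInv_eq_of_iso {W : Type*} [Fintype W] [DecidableEq W]
    (G : SimpleGraph V) (H : SimpleGraph W) [DecidableRel G.Adj] [DecidableRel H.Adj]
    (e : G ≃g H) : oddInv G = oddInv H := by
  unfold oddInv
  apply Fintype.card_congr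
  have hcard : ∀ a b : V,
      Fintype.card {w : V // G.Adj a w ∧ G.Adj b w} =
        Fintype.card {w : W // H.Adj (e a) w ∧ H.Adj (e b) w} := by
    intro a b
    apply Fintype.card_congr
    refine Equiv.subtypeEquiv e.toEquiv fun w => ?_
    show _ ↔ H.Adj (e a) (e w) ∧ H.Adj (e b) (e w)
    rw [e.map_adj_iff, e.map_adj_iff]
  refine Equiv.subtypeEquiv (Equiv.prodCongr e.toEquiv e.toEquiv) fun p => ?_
  show _ ↔ e p.1 ≠ e p.2 ∧ ¬ H.Adj (e p.1) (e p.2) ∧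
    Odd (Fintype.card {w : W // H.Adj (e p.1) w ∧ H.Adj (e p.2) w})
  constructor
  · rintro ⟨h1, h2, h3⟩
    exact ⟨fun hh => h1 (e.toEquiv.injective hh), fun hh => h2 (e.map_adj_iff.mp hh),
      by rwa [← hcard]⟩
  · rintro ⟨h1, h2, h3⟩
    exact ⟨fun hh => h1 (congrArg e hh), fun hh => h2 (e.map_adj_iff.mpr hh),
      by rwa [hcard]⟩

end Inv

/-! ### The three graphs -/

def mA : Fin 8 → ℕ := ![78, 97, 57, 133, 228, 22, 147, 88]
def mX : Fin 8 → ℕ := ![54, 145, 201, 100, 99, 25, 156, 70]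
def mY : Fin 8 → ℕ := ![54, 145, 201, 100, 35, 153, 140, 102]

def GA : SimpleGraph (Fin 8) :=
  { Adj := fun u v => (mA u).testBit v.val = true
    symm := ⟨by decide⟩
    loopless := ⟨by decide⟩ }

def GX : SimpleGraph (Fin 8) :=
  { Adj := fun u v => (mX u).testBit v.val = true
    symm := ⟨by decide⟩
    loopless := ⟨by decide⟩ }

def GY : SimpleGraph (Fin 8) :=
  { Adj := fun u v => (mY u).testBit v.val = true
    symm := ⟨by decide⟩
    loopless := ⟨by decide⟩ }

instance : DecidableRel GA.Adj :=
  fun u v => inferInstanceAs (Decidable ((mA u).testBit v.val = true))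
instance : DecidableRel GX.Adj :=
  fun u v => inferInstanceAs (Decidable ((mX u).testBit v.val = true))
instance : DecidableRel GY.Adj :=
  fun u v => inferInstanceAs (Decidable ((mY u).testBit v.val = true))

/-- self-complementing permutation for `GA` : rotation -/
def sigA : Fin 8 ≃ Fin 8 :=
  ⟨fun i => i + 1, fun i => i - 1, fun i => by fin_cases i <;> rfl,
    fun i => by fin_cases i <;> rfl⟩

/-- self-complementing permutation for `GX`, `GY` -/
def sigX : Fin 8 ≃ Fin 8 :=
  ⟨fun i => ![1, 2, 3, 0, 5, 6, 7, 4] i, fun i => ![3, 0, 1, 2, 7, 4, 5, 6] i,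
    fun i => by fin_cases i <;> rfl, fun i => by fin_cases i <;> rfl⟩

lemma oddInvA : oddInv GA = 8 := by decide
lemma oddInvX : oddInv GX = 0 := by decide
lemma oddInvY : oddInv GY = 16 := by decide

set_option maxRecDepth 100000 in
lemma bconnA : ∀ S : Finset (Fin 8), S.card ≤ 2 → bconn GA S = true := by decide
set_option maxRecDepth 100000 in
lemma bconnX : ∀ S : Finset (Fin 8), S.card ≤ 2 → bconn GX S = true := by decide
set_option maxRecDepth 100000 in
lemma bconnY : ∀ S : Finset (Fin 8), S.card ≤ 2 → bconn GY S = true := by decide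

lemma isoA : Nonempty (GA ≃g GAᶜ) :=
  ⟨⟨sigA, by intro a b; revert a b; decide⟩⟩

lemma isoX : Nonempty (GX ≃g GXᶜ) :=
  ⟨⟨sigX, by intro a b; revert a b; decide⟩⟩

lemma isoY : Nonempty (GY ≃g GYᶜ) :=
  ⟨⟨sigX, by intro a b; revert a b; decide⟩⟩

lemma degree_congr {V : Type*} (G : SimpleGraph V) (v : V)
    (i1 i2 : Fintype (G.neighborSet v)) :
    @SimpleGraph.degree _ G v i1 = @SimpleGraph.degree _ G v i2 := by
  have h : @SimpleGraph.neighborFinset _ G v i1 = @SimpleGraph.neighborFinset _ G v i2 :=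
    @Set.toFinset_congr _ _ _ i1 i2 rfl
  unfold SimpleGraph.degree
  rw [h]

lemma eA : GA.edgeFinset.card = 14 := by decide
lemma eX : GX.edgeFinset.card = 14 := by decide
lemma eY : GY.edgeFinset.card = 14 := by decide

lemma dA4 : (Finset.univ.filter fun v : Fin 8 => GA.degree v = 4).card = 4 := by decide
lemma dA3 : (Finset.univ.filter fun v : Fin 8 => GA.degree v = 3).card = 4 := by decide
lemma dX4 : (Finset.univ.filter fun v : Fin 8 => GX.degree v = 4).card = 4 := by decide
lemma dX3 : (Finset.univ.filter fun v : Fin 8 => GX.degree v = 3).card = 4 := by decide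
lemma dY4 : (Finset.univ.filter fun v : Fin 8 => GY.degree v = 4).card = 4 := by decide
lemma dY3 : (Finset.univ.filter fun v : Fin 8 => GY.degree v = 3).card = 4 := by decide

theorem stmt_0 :
    ∃ G₁ G₂ G₃ : SimpleGraph (Fin 8),
      (¬ Nonempty (G₁ ≃g G₂)) ∧ (¬ Nonempty (G₁ ≃g G₃)) ∧ (¬ Nonempty (G₂ ≃g G₃)) ∧
      (∀ G ∈ [G₁, G₂, G₃],
        Nonempty (G ≃g Gᶜ) ∧
        ThreeConnected G ∧
        G.edgeFinset.card = 14 ∧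
        (Finset.univ.filter fun v : Fin 8 => G.degree v = 4).card = 4 ∧
        (Finset.univ.filter fun v : Fin 8 => G.degree v = 3).card = 4) := by
  refine ⟨GA, GX, GY, ?_, ?_, ?_, ?_⟩
  · rintro ⟨e⟩
    have h := oddInv_eq_of_iso GA GX e
    rw [oddInvA, oddInvX] at h
    exact absurd h (by norm_num)
  · rintro ⟨e⟩
    have h := oddInv_eq_of_iso GA GY e
    rw [oddInvA, oddInvY] at h
    exact absurd h (by norm_num)
  · rintro ⟨e⟩
    have h := oddInv_eq_of_iso GX GY e
    rw [oddInvX, oddInvY] at h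
    exact absurd h (by norm_num)
  · intro G hG
    simp only [List.mem_cons, List.not_mem_nil, or_false] at hG
    rcases hG with rfl | rfl | rfl
    · refine ⟨isoA, threeConnected_of_bconn GA (by decide) bconnA, ?_, ?_, ?_⟩
      · convert eA
      · convert dA4 using 3
        rename_i v _; apply Eq.to_iff
        congr 1
        exact degree_congr GA v _ _
      · convert dA3 using 3
        rename_i v _; apply Eq.to_iff
        congr 1
        exact degree_congr GA v _ _
    · refine ⟨isoX, threeConnected_of_bconn GX (by decide) bconnX, ?_, ?_, ?_⟩
      · convert eX
      · convert dX4 using 3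
        rename_i v _; apply Eq.to_iff
        congr 1
        exact degree_congr GX v _ _
      · convert dX3 using 3
        rename_i v _; apply Eq.to_iff
        congr 1
        exact degree_congr GX v _ _
    · refine ⟨isoY, threeConnected_of_bconn GY (by decide) bconnY, ?_, ?_, ?_⟩
      · convert eY
      · convert dY4 using 3
        rename_i v _; apply Eq.to_iff
        congr 1
        exact degree_congr GY v _ _
      · convert dY3 using 3
        rename_i v _; apply Eq.to_iff
        congr 1
        exact degree_congr GY v _ _
end

section
/- If G is a simple graph on a finite vertex set V such that both G and its complement are 3-connected, then |V| ≥ 8. -/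
lemma three_le_degree_of_threeConnected {V : Type*} [Fintype V] [DecidableEq V]
    (G : SimpleGraph V) [DecidableRel G.Adj] (hG : ThreeConnected G) (v : V) :
    3 ≤ G.degree v := by
  by_contra h
  push_neg at h
  set S := G.neighborFinset v with hSdef
  have hS : S.card ≤ 2 := by
    rw [hSdef, G.card_neighborFinset_eq_degree]; omega
  obtain ⟨h4, hconn⟩ := hG
  have hc := hconn S hS
  have hvS : v ∉ S := by simp [hSdef]
  have hv : v ∈ ((↑S : Set V))ᶜ := by simpa using hvS
  have hcard : 2 ≤ (Sᶜ : Finset V).card := by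
    have := Finset.card_compl S
    have := Finset.card_le_univ S
    omega
  obtain ⟨w, hwmem, hwv⟩ := Finset.exists_mem_ne (s := Sᶜ) (by omega) v
  have hwS : w ∉ S := Finset.mem_compl.mp hwmem
  have hw' : w ∈ ((↑S : Set V))ᶜ := by simpa using hwS
  obtain ⟨p⟩ := hc.preconnected ⟨v, hv⟩ ⟨w, hw'⟩
  cases p with
  | nil => exact hwv rfl
  | cons ha _ =>
    rename_i u _
    have : G.Adj v u.val := ha
    have hmem : (u : V) ∈ S := by
      simpa [hSdef] using this
    exact u.2 (Finset.mem_coe.mpr hmem)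

theorem stmt_1 {V : Type*} [Fintype V] (G : SimpleGraph V)
    (hG : ThreeConnected G) (hGc : ThreeConnected Gᶜ) :
    8 ≤ Fintype.card V := by
  classical
  have hdeg := three_le_degree_of_threeConnected G hG
  have hdegc := three_le_degree_of_threeConnected Gᶜ hGc
  have hdc : ∀ v : V, Gᶜ.degree v = Fintype.card V - 1 - G.degree v := fun v =>
    SimpleGraph.degree_compl (G := G) (v := v)
  -- upper bound on degree
  have hub : ∀ v : V, G.degree v ≤ Fintype.card V - 4 := by
    intro v
    have h1 := hdegc v
    have h2 := hdc v
    have h3 : G.degree v ≤ Fintype.card V - 1 := by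
      have := G.degree_le_maxDegree v
      have := SimpleGraph.maxDegree_le_of_forall_degree_le G (Fintype.card V - 1)
        (fun w => Nat.le_sub_one_of_lt (SimpleGraph.degree_lt_card_verts (G := G) w))
      omega
    omega
  by_contra hlt
  push_neg at hlt
  obtain ⟨v0⟩ : Nonempty V := by
    have := hG.1
    exact Fintype.card_pos_iff.mp (by omega)
  have h7 : Fintype.card V = 7 := by
    have := hdeg v0
    have := hub v0
    have := hG.1
    omega
  have hall : ∀ v : V, G.degree v = 3 := by
    intro v
    have := hdeg v
    have := hub v
    omega
  have hsum : ∑ v : V, G.degree v = 2 * G.edgeFinset.card :=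
    SimpleGraph.sum_degrees_eq_twice_card_edges G
  have : ∑ v : V, G.degree v = 21 := by
    rw [Finset.sum_congr rfl (fun v _ => hall v), Finset.sum_const, Finset.card_univ, h7,
      smul_eq_mul]
  omega
end
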